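/- arXiv:1607.07955 — 2 statements merged into one kernel-verified Lean document; each statement's English description precedes it below -/
import Mathlib

section
/- For every Lyndon word l, in the free algebra T one has [l] = a_l·l + Σ_w a_w·w, where a_l is a nonzero scalar in F, and the sum runs over words w with |w| = |l| and w > l with scalars a_w in F. -/
noncomputable section

/-- Lexicographic order on words over the ordered alphabet `x_1 < ⋯ < x_n`. -/
def wlt {n : ℕ} (u v : FreeMonoid (Fin n)) : Prop :=
  List.Lex (· < ·) (FreeMonoid.toList u) (FreeMonoid.toList v)

/-- Lyndon word: nonempty and smaller than every rotation `u₂u₁` coming from a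
factorization `u = u₁u₂` into nonempty words. -/
def IsLyndon {n : ℕ} (u : FreeMonoid (Fin n)) : Prop :=
  u ≠ 1 ∧ ∀ v w : FreeMonoid (Fin n), v ≠ 1 → w ≠ 1 → u = v * w → wlt u (w * v)

/-- `(v, w)` is the Shirshov decomposition of `u`: both factors are Lyndon,
`u = v·w`, and `v` has minimal length among all such factorizations. -/
def IsShirshov {n : ℕ} (u v w : FreeMonoid (Fin n)) : Prop :=
  IsLyndon v ∧ IsLyndon w ∧ u = v * w ∧
    ∀ v' w' : FreeMonoid (Fin n), IsLyndon v' → IsLyndon w' → u = v' * w' →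
      FreeMonoid.length v ≤ FreeMonoid.length v'

/-- The `ℤⁿ`-degree of a word: the multidegree counting occurrences of each letter. -/
def degw {n : ℕ} (w : FreeMonoid (Fin n)) : Fin n → ℕ :=
  fun k => (FreeMonoid.toList w).count k

/-- The word `u` viewed as an element of the free algebra `T = F⟨x_1,…,x_n⟩`. -/
def wordOf (F : Type) [Field F] {n : ℕ} (u : FreeMonoid (Fin n)) :
    MonoidAlgebra F (FreeMonoid (Fin n)) :=
  MonoidAlgebra.of F (FreeMonoid (Fin n)) u

/-- The bicharacter `χ` determined by `χ(e_k, e_l) = q_{kl}`. -/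
def chiF (F : Type) [Field F] {n : ℕ} (q : Fin n → Fin n → F) (d e : Fin n → ℕ) : F :=
  ∏ k : Fin n, ∏ l : Fin n, q k l ^ (d k * e l)

/-!
By strong induction on the length. A Lyndon word `l` of length at least two is the product `v·w`
of two shorter Lyndon words (take `w` to be the lexicographically least proper suffix), so by
induction `[v]` and `[w]` are triangular with leading words `v` and `w`. For words of fixed
lengths, lexicographic comparison of products is decided by the first factor unless the first
factors coincide; hence `[v]·[w]` is triangular with leading word `v·w = l`, while every word of
`[w]·[v]` is at least `w·v`, which is greater than `l` because `l` is Lyndon. So `[l]` has leading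
coefficient `-p_{wv}·a_v·a_w ≠ 0`.
-/

theorem List.Lex.isPrefix_or_append {α : Type*} {r : α → α → Prop} :
    ∀ {x y : List α}, List.Lex r x y → x <+: y ∨ ∀ s t, List.Lex r (x ++ s) (y ++ t)
  | _, _, .nil => .inl List.nil_prefix
  | _, _, .rel h => .inr fun _ _ => .rel h
  | _, _, .cons h => (List.Lex.isPrefix_or_append h).imp
      (fun hp => List.cons_prefix_cons.2 ⟨rfl, hp⟩) (fun hf s t => .cons (hf s t))

open scoped Pointwise

namespace FreeMonoid

variable {α : Type*}

instance [LinearOrder α] : LinearOrder (FreeMonoid α) :=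
  LinearOrder.lift' toList toList.injective

theorem mul_eq_one_iff {a b : FreeMonoid α} : a * b = 1 ↔ a = 1 ∧ b = 1 := by
  simp only [← length_eq_zero, length_mul, Nat.add_eq_zero_iff]

theorem length_pos_iff_ne_one {a : FreeMonoid α} : 0 < a.length ↔ a ≠ 1 :=
  Nat.pos_iff_ne_zero.trans length_eq_zero.not

variable [LinearOrder α]

instance : MulLeftStrictMono (FreeMonoid α) :=
  ⟨fun x _ _ h => List.append_left_lt (l₁ := toList x) h⟩

instance : MulLeftReflectLT (FreeMonoid α) :=
  ⟨fun x y z h => by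
    by_contra hyz
    exact List.append_left_le (l₁ := toList x) (l₂ := toList z) (l₃ := toList y) hyz h⟩

instance : MulLeftMono (FreeMonoid α) := mulLeftMono_of_mulLeftStrictMono _

theorem le_mul_right (u v : FreeMonoid α) : u ≤ u * v :=
  not_lt.1 (List.le_append_left (l₁ := u.toList) (l₂ := v.toList))

theorem exists_mul_eq_or_mul_lt_mul {x y : FreeMonoid α} (h : x < y) :
    (∃ z, y = x * z) ∨ ∀ s t, x * s < y * t := by
  rcases List.Lex.isPrefix_or_append h with ⟨z, hz⟩ | hf
  · exact .inl ⟨ofList z, toList.injective (by simp [← hz])⟩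
  · exact .inr fun s t => hf s.toList t.toList

theorem mul_lt_mul_of_length_eq {x y : FreeMonoid α} (hl : x.length = y.length) (h : x < y)
    (s t : FreeMonoid α) : x * s < y * t := by
  refine (exists_mul_eq_or_mul_lt_mul h).resolve_left ?_ s t
  rintro ⟨z, rfl⟩
  obtain rfl : z = 1 := by simpa [length_mul, length_eq_zero] using hl
  exact h.ne (mul_one x).symm

def sameLengthGt (l : FreeMonoid α) : Set (FreeMonoid α) := {m | m.length = l.length ∧ l < m}

def sameLengthGe (l : FreeMonoid α) : Set (FreeMonoid α) := {m | m.length = l.length ∧ l ≤ m}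

theorem sameLengthGt_subset_sameLengthGe (l : FreeMonoid α) : sameLengthGt l ⊆ sameLengthGe l :=
  fun _ ⟨hlen, hlt⟩ => ⟨hlen, hlt.le⟩

theorem sameLengthGe_mul_sameLengthGe_subset (x y : FreeMonoid α) :
    sameLengthGe x * sameLengthGe y ⊆ sameLengthGe (x * y) := by
  rintro _ ⟨m₁, ⟨hl₁, h₁⟩, m₂, ⟨hl₂, h₂⟩, rfl⟩
  refine ⟨by simp only [length_mul, hl₁, hl₂], ?_⟩
  rcases h₁.eq_or_lt with rfl | h₁
  · exact mul_le_mul_right h₂ x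
  · exact (mul_lt_mul_of_length_eq hl₁.symm h₁ y m₂).le

theorem sameLengthGt_mul_sameLengthGe_subset (x y : FreeMonoid α) :
    sameLengthGt x * sameLengthGe y ⊆ sameLengthGt (x * y) := by
  rintro _ ⟨m₁, ⟨hl₁, h₁⟩, m₂, ⟨hl₂, -⟩, rfl⟩
  exact ⟨by simp only [length_mul, hl₁, hl₂],
    mul_lt_mul_of_length_eq hl₁.symm h₁ y m₂⟩

theorem sameLengthGe_mul_sameLengthGt_subset (x y : FreeMonoid α) :
    sameLengthGe x * sameLengthGt y ⊆ sameLengthGt (x * y) := by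
  rintro _ ⟨m₁, ⟨hl₁, h₁⟩, m₂, ⟨hl₂, h₂⟩, rfl⟩
  refine ⟨by simp only [length_mul, hl₁, hl₂], ?_⟩
  rcases h₁.eq_or_lt with rfl | h₁
  · exact (mul_lt_mul_iff_left x).2 h₂
  · exact mul_lt_mul_of_length_eq hl₁.symm h₁ y m₂

theorem exists_minimal_right_factor {u : FreeMonoid α} (hu : 2 ≤ u.length) :
    ∃ v w, v ≠ 1 ∧ w ≠ 1 ∧ u = v * w ∧
      ∀ v' w', v' ≠ 1 → w' ≠ 1 → u = v' * w' → w ≤ w' := by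
  obtain ⟨i, hi, hmin⟩ := (Finset.Ico 1 u.length).exists_min_image
    (fun i => ofList (u.toList.drop i)) ⟨1, Finset.mem_Ico.2 ⟨le_rfl, hu⟩⟩
  rw [Finset.mem_Ico] at hi
  have hlen : u.toList.length = u.length := rfl
  refine ⟨ofList (u.toList.take i), ofList (u.toList.drop i), ?_, ?_, ?_, ?_⟩
  · exact length_pos_iff_ne_one.1 (by simp [length]; omega)
  · exact length_pos_iff_ne_one.1 (by simp [length]; omega)
  · exact toList.injective (by simp)
  · rintro v' w' hv' hw' rfl
    have hv'0 := length_pos_iff_ne_one.2 hv'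
    have hw'0 := length_pos_iff_ne_one.2 hw'
    simpa [length] using
      hmin v'.length (Finset.mem_Ico.2 ⟨by omega, by rw [length_mul]; omega⟩)

end FreeMonoid

section Lyndon

open FreeMonoid

variable {n : ℕ}

theorem wlt_iff_lt {u v : FreeMonoid (Fin n)} : wlt u v ↔ u < v := Iff.rfl

theorem IsLyndon.lt_of_mul_eq {u v w : FreeMonoid (Fin n)} (hu : IsLyndon u) (hv : v ≠ 1)
    (hw : w ≠ 1) (h : u = v * w) : u < w := by
  have hrot : u < w * v := hu.2 v w hv hw h
  rcases lt_trichotomy u w with hlt | rfl | hgt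
  · exact hlt
  · exact absurd (right_eq_mul.1 h) hv
  · -- `u = w·m` would give `m < v` with `|m| = |v|`, so `m·w < v·w = u < m·w`
    exfalso
    rcases exists_mul_eq_or_mul_lt_mul hgt with ⟨m, rfl⟩ | hwu
    · have hm : m ≠ 1 := by rintro rfl; exact hgt.ne (mul_one w).symm
      have hlen : m.length = v.length := by
        have := congrArg length h; simp only [length_mul] at this; omega
      have hmv : m < v := (mul_lt_mul_iff_left w).1 hrot
      have hmw : w * m < m * w := hu.2 w m hw hm rfl
      exact hmw.not_gt (h ▸ mul_lt_mul_of_length_eq hlen hmv w w)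
    · exact hrot.not_gt (by simpa using hwu v 1)

theorem isLyndon_of_lt_right_factor {u : FreeMonoid (Fin n)} (hu : u ≠ 1)
    (h : ∀ v w, v ≠ 1 → w ≠ 1 → u = v * w → u < w) : IsLyndon u :=
  ⟨hu, fun v w hv hw huvw => (h v w hv hw huvw).trans_le (le_mul_right w v)⟩

theorem IsLyndon.exists_isLyndon_mul_eq {u : FreeMonoid (Fin n)} (hu : IsLyndon u)
    (h2 : 2 ≤ u.length) : ∃ v w, IsLyndon v ∧ IsLyndon w ∧ u = v * w := by
  obtain ⟨v, w, hv, hw, rfl, hmin⟩ := exists_minimal_right_factor h2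
  refine ⟨v, w, isLyndon_of_lt_right_factor hv fun a b ha hb hab => ?_,
    isLyndon_of_lt_right_factor hw fun a b ha hb hab => ?_, rfl⟩
  · -- if `b ≤ v = a·b`, either `v = b·c` and `c·w < w` contradicts the minimality of `w`,
    -- or `b·w < v·w = u`, contradicting `u < b·w`
    subst hab
    have hbw : b * w ≠ 1 := fun h => hw (mul_eq_one_iff.1 h).2
    have hub : a * b * w < b * w := hu.lt_of_mul_eq ha hbw (mul_assoc a b w)
    by_contra hab
    have hba : b < a * b := (not_lt.1 hab).lt_of_ne fun h => ha (right_eq_mul.1 h)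
    rcases exists_mul_eq_or_mul_lt_mul hba with ⟨c, hc⟩ | hbw_lt
    · have hcw : c * w ≠ 1 := fun h => hw (mul_eq_one_iff.1 h).2
      have hlt : c * w < w := by
        rw [hc, mul_assoc] at hub
        exact (mul_lt_mul_iff_left b).1 hub
      exact hlt.not_ge (hmin b (c * w) hb hcw (by rw [hc, mul_assoc]))
    · exact hub.not_gt (hbw_lt w w)
  · subst hab
    have hva : v * a ≠ 1 := fun h => hv (mul_eq_one_iff.1 h).1
    exact (hmin (v * a) b hva hb (mul_assoc v a b).symm).lt_of_ne
      fun h => ha (mul_eq_right.1 h)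

theorem IsLyndon.exists_isShirshov {u : FreeMonoid (Fin n)} (hu : IsLyndon u)
    (h2 : 2 ≤ u.length) : ∃ v w, IsShirshov u v w := by
  classical
  have hex : ∃ m, ∃ v w, IsLyndon v ∧ IsLyndon w ∧ u = v * w ∧ v.length = m :=
    let ⟨v, w, hv, hw, h⟩ := hu.exists_isLyndon_mul_eq h2
    ⟨_, v, w, hv, hw, h, rfl⟩
  obtain ⟨v, w, hv, hw, h, hlen⟩ := Nat.find_spec hex
  exact ⟨v, w, hv, hw, h, fun v' w' hv' hw' h' =>
    hlen ▸ Nat.find_min' hex ⟨v', w', hv', hw', h', rfl⟩⟩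

end Lyndon

theorem MonoidAlgebra.mul_mem_supported {R M : Type*} [Semiring R] [Mul M] {S T U : Set M}
    (h : S * T ⊆ U) {a b : MonoidAlgebra R M} (ha : a ∈ supported R R S)
    (hb : b ∈ supported R R T) : a * b ∈ supported R R U := by
  classical
  rw [mem_supported] at ha hb ⊢
  calc ((a * b).coeff.support : Set M) ⊆ ↑(a.coeff.support * b.coeff.support) :=
        Finset.coe_subset.2 (support_coeff_mul_subset a b)
    _ ⊆ S * T := by rw [Finset.coe_mul]; exact Set.mul_subset_mul ha hb
    _ ⊆ U := h

section FreeAlgebra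

open FreeMonoid MonoidAlgebra

variable {F : Type} [Field F] {n : ℕ}

theorem wordOf_mul (x y : FreeMonoid (Fin n)) : wordOf F (x * y) = wordOf F x * wordOf F y :=
  map_mul (of F (FreeMonoid (Fin n))) x y

theorem wordOf_mem_supported_sameLengthGe (v : FreeMonoid (Fin n)) :
    wordOf F v ∈ supported F F (sameLengthGe v) := by
  rw [mem_supported, wordOf, of_apply, coeff_single]
  exact (Finset.coe_subset.2 Finsupp.support_single_subset).trans (by simp [sameLengthGe])

theorem mem_supported_sameLengthGe_of_sub_smul {v : FreeMonoid (Fin n)}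
    {a : MonoidAlgebra F (FreeMonoid (Fin n))} {c : F}
    (h : a - c • wordOf F v ∈ supported F F (sameLengthGt v)) :
    a ∈ supported F F (sameLengthGe v) := by
  simpa using add_mem (Submodule.smul_mem _ c (wordOf_mem_supported_sameLengthGe v))
    (supported_mono (sameLengthGt_subset_sameLengthGe v) h)

theorem mul_sub_smul_mem_supported_sameLengthGt {v w : FreeMonoid (Fin n)}
    {a b : MonoidAlgebra F (FreeMonoid (Fin n))} {c d : F}
    (ha : a - c • wordOf F v ∈ supported F F (sameLengthGt v))
    (hb : b - d • wordOf F w ∈ supported F F (sameLengthGt w)) :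
    a * b - (c * d) • wordOf F (v * w) ∈ supported F F (sameLengthGt (v * w)) := by
  have hsplit : a * b - (c * d) • wordOf F (v * w) =
      (a - c • wordOf F v) * b + c • (wordOf F v * (b - d • wordOf F w)) := by
    simp only [wordOf_mul, sub_mul, mul_sub, smul_mul_assoc, mul_smul_comm, smul_smul, smul_sub]
    abel
  rw [hsplit]
  exact add_mem (mul_mem_supported (sameLengthGt_mul_sameLengthGe_subset v w) ha
      (mem_supported_sameLengthGe_of_sub_smul hb))
    (Submodule.smul_mem _ c (mul_mem_supported (sameLengthGe_mul_sameLengthGt_subset v w)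
      (wordOf_mem_supported_sameLengthGe v) hb))

theorem bracket_sub_smul_mem_supported_sameLengthGt {v w : FreeMonoid (Fin n)}
    (hvw : v * w < w * v) {a b : MonoidAlgebra F (FreeMonoid (Fin n))} {c d p : F}
    (ha : a - c • wordOf F v ∈ supported F F (sameLengthGt v))
    (hb : b - d • wordOf F w ∈ supported F F (sameLengthGt w)) :
    b * a - p • (a * b) - (-(p * (c * d))) • wordOf F (v * w) ∈
      supported F F (sameLengthGt (v * w)) := by
  have hba : b * a ∈ supported F F (sameLengthGt (v * w)) := by
    refine supported_mono ?_ (mul_mem_supported (sameLengthGe_mul_sameLengthGe_subset w v)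
      (mem_supported_sameLengthGe_of_sub_smul hb) (mem_supported_sameLengthGe_of_sub_smul ha))
    rintro m ⟨hlen, hle⟩
    exact ⟨by simp only [hlen, length_mul, add_comm], hvw.trans_le hle⟩
  have hsplit : b * a - p • (a * b) - (-(p * (c * d))) • wordOf F (v * w) =
      b * a - p • (a * b - (c * d) • wordOf F (v * w)) := by
    simp only [neg_smul, sub_neg_eq_add, smul_sub, smul_smul]
    abel
  rw [hsplit]
  exact sub_mem hba (Submodule.smul_mem _ p (mul_sub_smul_mem_supported_sameLengthGt ha hb))

theorem span_wordOf_sameLengthGt (l : FreeMonoid (Fin n)) :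
    Submodule.span F {y | ∃ w : FreeMonoid (Fin n),
      FreeMonoid.length w = FreeMonoid.length l ∧ wlt l w ∧ y = wordOf F w} =
      supported F F (sameLengthGt l) := by
  rw [supported_eq_span_single]
  congr 1
  ext y
  simp [sameLengthGt, wordOf, of_apply, eq_comm, wlt_iff_lt, and_assoc]

end FreeAlgebra

theorem chiF_ne_zero {F : Type} [Field F] {n : ℕ} {q : Fin n → Fin n → F}
    (hq : ∀ k l, q k l ≠ 0) (d e : Fin n → ℕ) : chiF F q d e ≠ 0 :=
  Finset.prod_ne_zero_iff.2 fun k _ => Finset.prod_ne_zero_iff.2 fun l _ => pow_ne_zero _ (hq k l)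

theorem stmt_10_general (F : Type) [Field F] (n : ℕ)
    (q : Fin n → Fin n → F) (hq : ∀ k l, q k l ≠ 0)
    (br : FreeMonoid (Fin n) → MonoidAlgebra F (FreeMonoid (Fin n)))
    (hbr1 : ∀ k : Fin n, br (FreeMonoid.of k) = wordOf F (FreeMonoid.of k))
    (hbr2 : ∀ u v w : FreeMonoid (Fin n), IsLyndon u → 2 ≤ FreeMonoid.length u →
      IsShirshov u v w →
      br u = br w * br v - chiF F q (degw w) (degw v) • (br v * br w))
    (l : FreeMonoid (Fin n)) (hl : IsLyndon l) :
    ∃ c : F, c ≠ 0 ∧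
      br l - c • wordOf F l ∈
        Submodule.span F
          { y : MonoidAlgebra F (FreeMonoid (Fin n)) | ∃ w : FreeMonoid (Fin n),
              FreeMonoid.length w = FreeMonoid.length l ∧ wlt l w ∧ y = wordOf F w } := by
  rw [span_wordOf_sameLengthGt]
  induction hN : l.length using Nat.strong_induction_on generalizing l with
  | _ N ih =>
  subst hN
  obtain hl1 | hl2 : l.length = 1 ∨ 2 ≤ l.length := by
    have hl0 := FreeMonoid.length_pos_iff_ne_one.2 hl.1; omega
  · obtain ⟨k, rfl⟩ := FreeMonoid.length_eq_one.1 hl1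
    exact ⟨1, one_ne_zero, by simp [hbr1]⟩
  · obtain ⟨v, w, hsh⟩ := hl.exists_isShirshov hl2
    rw [hbr2 l v w hl hl2 hsh]
    obtain ⟨hv, hw, rfl, -⟩ := hsh
    have hv0 := FreeMonoid.length_pos_iff_ne_one.2 hv.1
    have hw0 := FreeMonoid.length_pos_iff_ne_one.2 hw.1
    obtain ⟨c, hc, hvc⟩ := ih v.length (by rw [FreeMonoid.length_mul]; omega) v hv rfl
    obtain ⟨d, hd, hwd⟩ := ih w.length (by rw [FreeMonoid.length_mul]; omega) w hw rfl
    exact ⟨-(chiF F q (degw w) (degw v) * (c * d)), by simp [chiF_ne_zero hq, hc, hd],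
      bracket_sub_smul_mem_supported_sameLengthGt (hl.2 v w hv.1 hw.1 rfl) hvc hwd⟩

/-- for any Lyndon word `l`, in the free algebra one has
`[l] = a_l·l + (linear combination of greater words of the same length)` with
`a_l ≠ 0`, where `[·]` is defined by `[x_k] = x_k` and
`[u] = [w]·[v] − p_{wv}·[v]·[w]` on the Shirshov decomposition `u = v·w`. -/
theorem stmt_10 (F : Type) [Field F] [CharZero F] (n : ℕ) (hn : 1 ≤ n)
    (q : Fin n → Fin n → F) (hq : ∀ k l, q k l ≠ 0)
    (br : FreeMonoid (Fin n) → MonoidAlgebra F (FreeMonoid (Fin n)))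
    (hbr1 : ∀ k : Fin n, br (FreeMonoid.of k) = wordOf F (FreeMonoid.of k))
    (hbr2 : ∀ u v w : FreeMonoid (Fin n), IsLyndon u → 2 ≤ FreeMonoid.length u →
      IsShirshov u v w →
      br u = br w * br v - chiF F q (degw w) (degw v) • (br v * br w))
    (l : FreeMonoid (Fin n)) (hl : IsLyndon l) :
    ∃ c : F, c ≠ 0 ∧
      br l - c • wordOf F l ∈
        Submodule.span F
          { y : MonoidAlgebra F (FreeMonoid (Fin n)) | ∃ w : FreeMonoid (Fin n),
              FreeMonoid.length w = FreeMonoid.length l ∧ wlt l w ∧ y = wordOf F w } :=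
  stmt_10_general F n q hq br hbr1 hbr2 l hl

end
end

section
/- Let g be the Lie subalgebra of R (viewed as a Lie algebra under the commutator bracket [x,y]⁻ = y·x − x·y) generated by the images π(x_1), …, π(x_n). If the set of Lyndon words that are standard with respect to R is infinite, then g is infinite-dimensional over F. -/
noncomputable section

/-- `u` is standard w.r.t. the quotient `π : T → R`:  `π(u)` is not a linear
combination of images of strictly greater words of the same length. -/
def IsStandard (F : Type) [Field F] {n : ℕ} {R : Type} [Ring R] [Algebra F R]
    (π : MonoidAlgebra F (FreeMonoid (Fin n)) →ₐ[F] R) (u : FreeMonoid (Fin n)) : Prop :=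
  π (wordOf F u) ∉ Submodule.span F
    { y : R | ∃ w : FreeMonoid (Fin n),
        FreeMonoid.length w = FreeMonoid.length u ∧ wlt u w ∧ y = π (wordOf F w) }

/-- The kernel of `π` (i.e. the ideal `I`) is homogeneous w.r.t. the length grading:
it contains each length-homogeneous component of each of its elements. -/
def HomogKer (F : Type) [Field F] {n : ℕ} {R : Type} [Ring R] [Algebra F R]
    (π : MonoidAlgebra F (FreeMonoid (Fin n)) →ₐ[F] R) : Prop :=
  ∀ x : MonoidAlgebra F (FreeMonoid (Fin n)), π x = 0 →
    ∀ d : ℕ, π (MonoidAlgebra.ofCoeff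
      (Finsupp.filter (fun w : FreeMonoid (Fin n) => FreeMonoid.length w = d) x.coeff)) = 0

attribute [local instance 100] LieRing.ofAssociativeRing

/-
Every Lyndon word `u` is the smallest word of some homogeneous Lie polynomial `z_u` in the
generators, with coefficient one: for a letter take the letter itself, and for the standard
factorization `u = v w` (with `w` the lexicographically smallest proper suffix, so that `v` and `w`
are Lyndon and `u < w`) take `[z_v, z_w]`. If `u` is standard, then `π z_u ≠ 0`, since otherwise
`π u` would be a combination of images of larger words of the same length. Only finitely many
words have a given length, so infinitely many standard Lyndon words give elements `π z_u` of the
Lie algebra in infinitely many distinct degrees; as the ideal is homogeneous, they are linearly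
independent.
-/

namespace List

variable {α : Type*} [LinearOrder α] {a b l : List α}

theorem append_lt_append_of_lt_of_not_prefix (h : a < b) (hp : ¬a <+: b) (s t : List α) :
    a ++ s < b ++ t := by
  induction h with
  | nil => exact absurd (nil_prefix) hp
  | cons _ ih => exact Lex.cons (ih fun h' => hp ((prefix_cons_inj _).2 h'))
  | rel h => exact Lex.rel h

theorem append_lt_append_of_lt_of_length_le (h : a < b) (hl : b.length ≤ a.length)
    (s t : List α) : a ++ s < b ++ t :=
  append_lt_append_of_lt_of_not_prefix h
    (fun hp => h.ne (hp.eq_of_length (le_antisymm hp.length_le hl))) s t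

theorem lt_of_append_lt_append_left {p : List α} (h : p ++ a < p ++ b) : a < b :=
  by_contra fun hab => append_left_le (l₁ := p) (List.not_lt.1 hab) h

/-- The suffix characterization of Lyndon words. -/
def LtProperSuffixes (l : List α) : Prop :=
  l ≠ [] ∧ ∀ p s : List α, p ≠ [] → s ≠ [] → l = p ++ s → l < s

theorem ltProperSuffixes_of_lt_rotations (hne : l ≠ [])
    (h : ∀ p q : List α, p ≠ [] → q ≠ [] → l = p ++ q → l < q ++ p) : LtProperSuffixes l := by
  refine ⟨hne, fun p s hp hs hl => lt_of_not_ge fun hsl => ?_⟩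
  have hrot := h p s hp hs hl
  have hlen : s.length < l.length := by simp [hl, length_pos_iff.2 hp]
  by_cases hpre : s <+: l
  · obtain ⟨t, rfl⟩ := hpre
    have ht : t ≠ [] := by rintro rfl; simp at hlen
    have htp : t < p := lt_of_append_lt_append_left hrot
    have hpt : p.length ≤ t.length := by have := congrArg length hl; simp at this; omega
    have hlt : t ++ s < p ++ s := append_lt_append_of_lt_of_length_le htp hpt s s
    rw [← hl] at hlt
    exact lt_asymm (h s t hs ht rfl) hlt
  · have hsl' : s < l := lt_of_le_of_ne hsl (by rintro rfl; simp at hlen)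
    exact lt_asymm hrot (by simpa using append_lt_append_of_lt_of_not_prefix hsl' hpre p [])

theorem exists_eq_append_min_suffix (h2 : 2 ≤ l.length) :
    ∃ v w : List α, v ≠ [] ∧ w ≠ [] ∧ l = v ++ w ∧
      ∀ p s : List α, p ≠ [] → s ≠ [] → l = p ++ s → w ≤ s := by
  let S := {s : List α | s ≠ [] ∧ ∃ p, p ≠ [] ∧ l = p ++ s}
  have hfin : S.Finite :=
    l.tails.finite_toSet.subset fun s ⟨_, p, _, h⟩ => (mem_tails _ _).2 ⟨p, h.symm⟩
  obtain ⟨a, l', rfl⟩ := exists_cons_of_length_pos (by omega : 0 < l.length)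
  have hne : S.Nonempty := ⟨l', by rintro rfl; simp at h2, [a], by simp, rfl⟩
  obtain ⟨w, ⟨hw, v, hv, hl⟩, hmin⟩ := Set.exists_min_image S id hfin hne
  exact ⟨v, w, hv, hw, hl, fun p s hp hs h => hmin s ⟨hs, p, hp, h⟩⟩

variable {v w : List α}

theorem ltProperSuffixes_of_min_suffix (hv : v ≠ []) (hw : w ≠ [])
    (hmin : ∀ p s : List α, p ≠ [] → s ≠ [] → v ++ w = p ++ s → w ≤ s) :
    LtProperSuffixes w := by
  refine ⟨hw, fun p s hp hs hps => lt_of_le_of_ne ?_ ?_⟩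
  · exact hmin (v ++ p) s (by simp [hv]) hs (by simp [hps])
  · rintro rfl
    simpa [hp] using congrArg length hps

theorem LtProperSuffixes.left_of_min_suffix (hl : LtProperSuffixes (v ++ w)) (hv : v ≠ [])
    (hmin : ∀ p s : List α, p ≠ [] → s ≠ [] → v ++ w = p ++ s → w ≤ s) :
    LtProperSuffixes v := by
  refine ⟨hv, fun p s hp hs hps => lt_of_not_ge fun hsv => ?_⟩
  have hsw : v ++ w < s ++ w := hl.2 p (s ++ w) hp (by simp [hs]) (by simp [hps])
  have hlen : s.length < v.length := by simp [hps, length_pos_iff.2 hp]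
  have hsv : s < v := lt_of_le_of_ne hsv (by rintro rfl; simp at hlen)
  by_cases hpre : s <+: v
  · obtain ⟨t, rfl⟩ := hpre
    have ht : t ≠ [] := by rintro rfl; simp at hlen
    have htw : t ++ w < w := lt_of_append_lt_append_left (p := s) (by simpa using hsw)
    exact not_le_of_gt htw (hmin s (t ++ w) hs (by simp [ht]) (by simp))
  · exact lt_asymm hsw (append_lt_append_of_lt_of_not_prefix hsv hpre w w)

theorem LtProperSuffixes.exists_eq_append (hl : LtProperSuffixes l) (h2 : 2 ≤ l.length) :
    ∃ v w : List α, l = v ++ w ∧ LtProperSuffixes v ∧ LtProperSuffixes w := by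
  obtain ⟨v, w, hv, hw, rfl, hmin⟩ := exists_eq_append_min_suffix h2
  exact ⟨v, w, rfl, hl.left_of_min_suffix hv hmin, ltProperSuffixes_of_min_suffix hv hw hmin⟩

end List

section Words

open Pointwise

variable {α : Type*}

theorem FreeMonoid.finite_setOf_length_eq [Finite α] (d : ℕ) :
    {u : FreeMonoid α | u.length = d}.Finite :=
  List.finite_length_eq α d

theorem Set.Infinite.image_length [Finite α] {S : Set (FreeMonoid α)} (hS : S.Infinite) :
    (FreeMonoid.length '' S).Infinite := fun hfin =>
  hS ((hfin.preimage' fun d _ => FreeMonoid.finite_setOf_length_eq d).subset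
    (Set.subset_preimage_image _ _))

def wordsOfLength (α : Type*) (d : ℕ) : Set (FreeMonoid α) := {w | w.length = d}

variable [LinearOrder α]

def wordsAbove (u : FreeMonoid α) : Set (FreeMonoid α) :=
  {w | w.length = u.length ∧ u.toList < w.toList}

theorem insert_wordsAbove_subset_wordsOfLength (u : FreeMonoid α) :
    insert u (wordsAbove u) ⊆ wordsOfLength α u.length :=
  Set.insert_subset_iff.2 ⟨rfl, fun _ h => h.1⟩

theorem singleton_mul_wordsAbove_subset (v w : FreeMonoid α) :
    ({v} : Set (FreeMonoid α)) * wordsAbove w ⊆ wordsAbove (v * w) := by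
  rintro _ ⟨_, rfl, w', ⟨hlen, hlt⟩, rfl⟩
  exact ⟨by simp [FreeMonoid.length_mul, hlen], List.append_left_lt hlt⟩

theorem wordsAbove_mul_wordsOfLength_subset (v w : FreeMonoid α) :
    wordsAbove v * wordsOfLength α w.length ⊆ wordsAbove (v * w) := by
  rintro _ ⟨v', ⟨hv, hlt⟩, w', hw, rfl⟩
  exact ⟨by simp_all [wordsOfLength, FreeMonoid.length_mul],
    List.append_lt_append_of_lt_of_length_le hlt hv.le _ _⟩

theorem insert_wordsAbove_mul_wordsOfLength_subset {v w : FreeMonoid α}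
    (h : (v * w).toList < w.toList) :
    insert w (wordsAbove w) * wordsOfLength α v.length ⊆ wordsAbove (v * w) := by
  rintro _ ⟨w', hw', v', hv', rfl⟩
  have hlen : w'.length = w.length := by rcases hw' with rfl | hw' <;> simp_all [wordsAbove]
  have hlt : (v * w).toList < w'.toList := by
    rcases hw' with rfl | hw'
    exacts [h, lt_trans h hw'.2]
  refine ⟨by simp_all [wordsOfLength, FreeMonoid.length_mul, add_comm], ?_⟩
  simpa using List.append_lt_append_of_lt_of_length_le hlt
    (show w'.length ≤ (v * w).length by simp [FreeMonoid.length_mul, hlen]) [] v'.toList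

end Words

namespace MonoidAlgebra

open Pointwise

variable {k G : Type*}

theorem mul_mem_supported_mul [Semiring k] [Mul G] {S T : Set G} {x y : MonoidAlgebra k G}
    (hx : x ∈ supported k k S) (hy : y ∈ supported k k T) : x * y ∈ supported k k (S * T) := by
  classical
  refine (Finset.coe_subset.2 (support_coeff_mul_subset x y)).trans ?_
  rw [Finset.coe_mul]
  exact Set.mul_subset_mul hx hy

theorem of_mem_supported [Semiring k] [MulOneClass G] {S : Set G} {g : G} (hg : g ∈ S) :
    of k G g ∈ supported k k S :=
  (Finset.coe_subset.2 Finsupp.support_single_subset).trans (by simpa using hg)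

theorem mem_supported_insert_of_sub_mem [Ring k] [MulOneClass G] {S : Set G} {g : G}
    {x : MonoidAlgebra k G} (hx : x - of k G g ∈ supported k k S) :
    x ∈ supported k k (insert g S) := by
  simpa using add_mem (supported_mono (Set.subset_insert g S) hx)
    (of_mem_supported (k := k) (Set.mem_insert g S))

end MonoidAlgebra

theorem LieHom.apply_mem_lieSpan_image_of_mem_lieSpan {R L L₂ : Type*} [CommRing R] [LieRing L]
    [LieAlgebra R L] [LieRing L₂] [LieAlgebra R L₂] (f : L →ₗ⁅R⁆ L₂) {s : Set L} {x : L}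
    (hx : x ∈ LieSubalgebra.lieSpan R L s) : f x ∈ LieSubalgebra.lieSpan R L₂ (f '' s) := by
  rw [← LieSubalgebra.map_lieSpan]
  exact (LieSubalgebra.mem_map ..).2 ⟨x, hx, rfl⟩

section LeadingWord

open MonoidAlgebra

variable {k α : Type*} [CommRing k] [LinearOrder α]

/-- `u` occurs in `z` with coefficient one, and every other word of `z` has the length of `u` and
is lexicographically larger. -/
def HasLeadingWord (z : MonoidAlgebra k (FreeMonoid α)) (u : FreeMonoid α) : Prop :=
  z - of k _ u ∈ supported k k (wordsAbove u)

variable {z zv zw : MonoidAlgebra k (FreeMonoid α)} {u v w : FreeMonoid α}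

theorem HasLeadingWord.mem_supported_insert (h : HasLeadingWord z u) :
    z ∈ supported k k (insert u (wordsAbove u)) :=
  mem_supported_insert_of_sub_mem h

theorem HasLeadingWord.mem_supported_wordsOfLength (h : HasLeadingWord z u) :
    z ∈ supported k k (wordsOfLength α u.length) :=
  supported_mono (insert_wordsAbove_subset_wordsOfLength u) h.mem_supported_insert

theorem HasLeadingWord.lie (hvw : (v * w).toList < w.toList) (hv : HasLeadingWord zv v)
    (hw : HasLeadingWord zw w) : HasLeadingWord ⁅zv, zw⁆ (v * w) := by
  have h₁ := supported_mono (singleton_mul_wordsAbove_subset v w)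
    (mul_mem_supported_mul (of_mem_supported (k := k) rfl) hw)
  have h₂ := supported_mono (wordsAbove_mul_wordsOfLength_subset v w)
    (mul_mem_supported_mul hv hw.mem_supported_wordsOfLength)
  -- `zw * zv` has no `vw` term at all: its words start with a word `≥ w > vw` of length `< |vw|`.
  have h₃ := supported_mono (insert_wordsAbove_mul_wordsOfLength_subset hvw)
    (mul_mem_supported_mul hw.mem_supported_insert hv.mem_supported_wordsOfLength)
  have hsplit : ⁅zv, zw⁆ - of k _ (v * w) =
      of k _ v * (zw - of k _ w) + (zv - of k _ v) * zw - zw * zv := by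
    rw [Ring.lie_def, map_mul]
    noncomm_ring
  rw [HasLeadingWord, hsplit]
  exact sub_mem (add_mem h₁ h₂) h₃

theorem exists_mem_lieSpan_hasLeadingWord (u : FreeMonoid α)
    (hu : List.LtProperSuffixes u.toList) :
    ∃ z ∈ LieSubalgebra.lieSpan k (MonoidAlgebra k (FreeMonoid α))
        (Set.range fun a => of k _ (FreeMonoid.of a)), HasLeadingWord z u := by
  induction hd : u.length using Nat.strong_induction_on generalizing u with
  | _ d ih =>
  obtain hd2 | hd2 := lt_or_ge d 2
  · obtain ⟨a, rfl⟩ : ∃ a, u = FreeMonoid.of a := FreeMonoid.length_eq_one.1 <| by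
      have := List.length_pos_iff.2 hu.1
      rw [← hd] at hd2
      exact le_antisymm (by omega) this
    exact ⟨_, LieSubalgebra.subset_lieSpan ⟨a, rfl⟩, by simp [HasLeadingWord]⟩
  · obtain ⟨v, w, huvw, hv, hw⟩ := hu.exists_eq_append (by rw [← hd] at hd2; exact hd2)
    obtain rfl : u = FreeMonoid.ofList v * FreeMonoid.ofList w :=
      FreeMonoid.toList.injective huvw
    have hvpos := List.length_pos_iff.2 hv.1
    have hwpos := List.length_pos_iff.2 hw.1
    have hlen : d = v.length + w.length := by rw [← hd, FreeMonoid.length_mul]; rfl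
    obtain ⟨zv, hzv, hzv_lead⟩ := ih v.length (by omega) (FreeMonoid.ofList v) hv rfl
    obtain ⟨zw, hzw, hzw_lead⟩ := ih w.length (by omega) (FreeMonoid.ofList w) hw rfl
    exact ⟨⁅zv, zw⁆, LieSubalgebra.lie_mem _ hzv hzw,
      hzv_lead.lie (hu.2 v w hv.1 hw.1 huvw) hzw_lead⟩

end LeadingWord

section Homogeneous

open MonoidAlgebra

variable {k α : Type*} [Semiring k]

def homogeneousComponent (d : ℕ) :
    MonoidAlgebra k (FreeMonoid α) →ₗ[k] MonoidAlgebra k (FreeMonoid α) where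
  toFun x := ofCoeff (x.coeff.filter fun w => w.length = d)
  map_add' x y := by rw [coeff_add, Finsupp.filter_add]; rfl
  map_smul' c x := by rw [coeff_smul, Finsupp.filter_smul]; rfl

theorem homogeneousComponent_of_mem_supported {e : ℕ} {x : MonoidAlgebra k (FreeMonoid α)}
    (hx : x ∈ supported k k (wordsOfLength α e)) (d : ℕ) :
    homogeneousComponent d x = if e = d then x else 0 := by
  rw [mem_supported'] at hx
  refine coeff_injective ?_
  split_ifs with hed
  · refine (Finsupp.filter_eq_self_iff _ _).2 fun w hw => ?_
    subst hed
    by_contra h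
    exact hw (hx w h)
  · refine (Finsupp.filter_eq_zero_iff _ _).2 fun w hw => hx w fun h => hed (h.symm.trans hw)

end Homogeneous

section Standard

open MonoidAlgebra

variable {F : Type} [Field F] {n : ℕ} {R : Type} [Ring R] [Algebra F R]
  {π : MonoidAlgebra F (FreeMonoid (Fin n)) →ₐ[F] R}

theorem IsLyndon.ltProperSuffixes_toList {u : FreeMonoid (Fin n)} (h : IsLyndon u) :
    List.LtProperSuffixes u.toList :=
  List.ltProperSuffixes_of_lt_rotations (fun he => h.1 (FreeMonoid.toList.injective he))
    fun p q hp hq hpq => h.2 (.ofList p) (.ofList q) hp hq (FreeMonoid.toList.injective hpq)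

theorem IsStandard.map_ne_zero_of_hasLeadingWord {u : FreeMonoid (Fin n)} (hu : IsStandard F π u)
    {z : MonoidAlgebra F (FreeMonoid (Fin n))} (hz : HasLeadingWord z u) : π z ≠ 0 := by
  intro h0
  have hspan := Submodule.mem_map_of_mem (f := π.toLinearMap)
    (show z - wordOf F u ∈ supported F F (wordsAbove u) from hz)
  rw [supported_eq_span_single, Submodule.map_span] at hspan
  have hneg : π (wordOf F u) = -π.toLinearMap (z - wordOf F u) := by simp [h0]
  refine hu (hneg ▸ neg_mem (Submodule.span_mono ?_ hspan))
  rintro _ ⟨_, ⟨w, hw, rfl⟩, rfl⟩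
  exact ⟨w, hw.1, hw.2, rfl⟩

theorem HomogKer.linearIndependent_map {ι : Type*} (hI : HomogKer F π)
    {x : ι → MonoidAlgebra F (FreeMonoid (Fin n))} {deg : ι → ℕ} (hdeg : Function.Injective deg)
    (hx : ∀ i, x i ∈ supported F F (wordsOfLength (Fin n) (deg i))) (hπx : ∀ i, π (x i) ≠ 0) :
    LinearIndependent F fun i => π (x i) := by
  rw [linearIndependent_iff']
  intro s c hsum i hi
  have hker := hI (∑ j ∈ s, c j • x j) (by simpa [map_sum] using hsum) (deg i)
  have hcomp : homogeneousComponent (deg i) (∑ j ∈ s, c j • x j) = c i • x i := by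
    rw [map_sum, Finset.sum_eq_single i]
    · simp [homogeneousComponent_of_mem_supported (hx i)]
    · intro j _ hji
      simp [homogeneousComponent_of_mem_supported (hx j), hdeg.ne hji]
    · exact fun h => absurd hi h
  change π (homogeneousComponent (deg i) _) = 0 at hker
  rw [hcomp, map_smul] at hker
  exact (smul_eq_zero.1 hker).resolve_right (hπx i)

end Standard

theorem stmt_13_general (F : Type) [Field F] (n : ℕ)
    (R : Type) [Ring R] [Algebra F R]
    (π : MonoidAlgebra F (FreeMonoid (Fin n)) →ₐ[F] R)
    (hI : HomogKer F π)
    (hinf : {u : FreeMonoid (Fin n) | IsLyndon u ∧ IsStandard F π u}.Infinite) :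
    ¬ FiniteDimensional F
      (LieSubalgebra.lieSpan F R
        (Set.range fun i : Fin n => π (wordOf F (FreeMonoid.of i)))) := by
  set S := {u : FreeMonoid (Fin n) | IsLyndon u ∧ IsStandard F π u}
  have hgen : ∀ d : FreeMonoid.length '' S,
      ∃ z ∈ LieSubalgebra.lieSpan F (MonoidAlgebra F (FreeMonoid (Fin n)))
        (Set.range fun i : Fin n => wordOf F (FreeMonoid.of i)),
      z ∈ MonoidAlgebra.supported F F (wordsOfLength (Fin n) d) ∧ π z ≠ 0 := by
    rintro ⟨_, u, ⟨hlyn, hstd⟩, rfl⟩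
    obtain ⟨z, hz, hlead⟩ :=
      exists_mem_lieSpan_hasLeadingWord (k := F) u hlyn.ltProperSuffixes_toList
    exact ⟨z, hz, hlead.mem_supported_wordsOfLength, hstd.map_ne_zero_of_hasLeadingWord hlead⟩
  choose z hz_lie hz_deg hz_ne using hgen
  have hπz : ∀ d, π (z d) ∈ LieSubalgebra.lieSpan F R
      (Set.range fun i : Fin n => π (wordOf F (FreeMonoid.of i))) := fun d => by
    have := π.toLieHom.apply_mem_lieSpan_image_of_mem_lieSpan (hz_lie d)
    rwa [← Set.range_comp] at this
  have : Infinite (FreeMonoid.length '' S) := hinf.image_length.to_subtype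
  have hli : LinearIndependent F fun d : FreeMonoid.length '' S =>
      (⟨π (z d), hπz d⟩ : LieSubalgebra.lieSpan F R
        (Set.range fun i : Fin n => π (wordOf F (FreeMonoid.of i)))) :=
    LinearIndependent.of_comp (LieSubalgebra.toSubmodule _).subtype
      (hI.linearIndependent_map Subtype.val_injective hz_deg hz_ne)
  intro hfd
  exact Module.Finite.not_linearIndependent_of_infinite _ hli

/-- if there are infinitely many standard Lyndon words, then the Lie
subalgebra of `R` (with the commutator bracket) generated by the images of the
generators `x_1, …, x_n` is infinite-dimensional over `F`. -/
theorem stmt_13 (F : Type) [Field F] [CharZero F] (n : ℕ) (hn : 1 ≤ n)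
    (R : Type) [Ring R] [Algebra F R]
    (π : MonoidAlgebra F (FreeMonoid (Fin n)) →ₐ[F] R)
    (hπ : Function.Surjective π) (hI : HomogKer F π)
    (hinf : {u : FreeMonoid (Fin n) | IsLyndon u ∧ IsStandard F π u}.Infinite) :
    ¬ FiniteDimensional F
      (LieSubalgebra.lieSpan F R
        (Set.range fun i : Fin n => π (wordOf F (FreeMonoid.of i)))) :=
  stmt_13_general F n R π hI hinf

end
end
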